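/- arXiv:0811.3547 — 2 statements merged into one kernel-verified Lean document; each statement's English description precedes it below -/
import Mathlib

section
/- Let C be a small category satisfying the right Ore condition and let J_at be a Grothendieck topology on C whose covering sieves on every object are exactly the nonempty sieves. Then a J_at-sheaf F is an atom of Sh(C, J_at) if and only if there exist an object c of C and an element x ∈ F(c) such that for every J_at-sheaf G, the map Hom_{Sh(C,J_at)}(F, G) → G(c) sending a morphism α to the component α_c evaluated at x is injective (i.e., every morphism from F to any sheaf is uniquely determined by its value at x). -/
/-!
For the atomic topology on a right Ore category every constant presheaf is a sheaf. Mapping into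
the constant sheaf on the empty type shows that a sheaf is initial exactly when all its sections
are empty.

If `F` is an atom and `α β : F ⟶ G` agree at a section `x`, then `x` lies in the equalizer of
`α` and `β`, which is therefore a non-initial subsheaf of `F`, hence all of `F`, so `α = β`.

Conversely, suppose morphisms out of `F` are determined by their value at `x ∈ F(c)`. The
predicate "has a common restriction with `x`" is stable under restriction (by the Ore condition),
so it is a morphism from `F` to the constant sheaf on `Prop`; it agrees with the constant map
`True` at `x`, so every section of `F` has a common restriction with `x`. Given a subsheaf
`S ↪ F` with a section `y`, every section of `F` thus has a common restriction with the image of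
`y`, i.e. `S ↪ F` is locally surjective, and a locally surjective monomorphism of sheaves is an
isomorphism.
-/

open CategoryTheory CategoryTheory.Limits

universe u

def IsAtomObj {E : Type*} [Category E] (A : E) : Prop :=
  (¬ Nonempty (IsInitial A)) ∧
    ∀ ⦃S : E⦄ (m : S ⟶ A), Mono m → (IsIso m ∨ Nonempty (IsInitial S))

open Opposite GrothendieckTopology

universe v w

variable {C : Type u} [Category.{v} C]

namespace CategoryTheory.Presheaf

def HasCommonRestriction (F : Cᵒᵖ ⥤ Type w) {U V : Cᵒᵖ} (x : F.obj U) (y : F.obj V) :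
    Prop :=
  ∃ (W : Cᵒᵖ) (f : U ⟶ W) (g : V ⟶ W), F.map f x = F.map g y

variable {F : Cᵒᵖ ⥤ Type w} {U V W : Cᵒᵖ}

lemma HasCommonRestriction.refl (x : F.obj U) : HasCommonRestriction F x x :=
  ⟨U, 𝟙 U, 𝟙 U, rfl⟩

lemma HasCommonRestriction.symm {x : F.obj U} {y : F.obj V} (h : HasCommonRestriction F x y) :
    HasCommonRestriction F y x :=
  let ⟨W, f, g, hfg⟩ := h
  ⟨W, g, f, hfg.symm⟩

lemma HasCommonRestriction.trans (hro : RightOreCondition C) {x : F.obj U} {y : F.obj V}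
    {z : F.obj W} (hxy : HasCommonRestriction F x y) (hyz : HasCommonRestriction F y z) :
    HasCommonRestriction F x z := by
  obtain ⟨A, f, g, hfg⟩ := hxy
  obtain ⟨B, g', h, hgh⟩ := hyz
  obtain ⟨D, p, q, hpq⟩ := hro g.unop g'.unop
  have hsquare : g ≫ p.op = g' ≫ q.op := Quiver.Hom.unop_inj (by simpa using hpq)
  refine ⟨op D, f ≫ p.op, h ≫ q.op, ?_⟩
  calc F.map (f ≫ p.op) x = F.map (g ≫ p.op) y := by simp only [Functor.map_comp_apply, hfg]
    _ = F.map (g' ≫ q.op) y := by rw [hsquare]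
    _ = F.map (h ≫ q.op) z := by simp only [Functor.map_comp_apply, hgh]

lemma hasCommonRestriction_map_self (f : U ⟶ V) (x : F.obj U) :
    HasCommonRestriction F (F.map f x) x :=
  ⟨V, 𝟙 V, f, by simp⟩

lemma hasCommonRestriction_map_left_iff (hro : RightOreCondition C) (f : U ⟶ V) (x : F.obj U)
    (y : F.obj W) : HasCommonRestriction F (F.map f x) y ↔ HasCommonRestriction F x y :=
  ⟨(hasCommonRestriction_map_self f x).symm.trans hro,
    (hasCommonRestriction_map_self f x).trans hro⟩

end CategoryTheory.Presheaf

namespace CategoryTheory.Sheaf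

variable {J : GrothendieckTopology C}

/-- Equivalently, the morphism to `F` from the sheafified representable at `U` that classifies `x`
is an epimorphism. -/
def IsGeneratingSection {F : Sheaf J (Type w)} {U : Cᵒᵖ} (x : F.obj.obj U) : Prop :=
  ∀ G : Sheaf J (Type w), Function.Injective fun α : F ⟶ G => α.hom.app U x

noncomputable def isInitialOfIsEmpty (S : Sheaf J (Type w)) (h : ∀ U, IsEmpty (S.obj.obj U)) :
    IsInitial S :=
  IsInitial.ofUniqueHom
    (fun _ => ObjectProperty.homMk
      { app := fun U => TypeCat.ofHom fun s => (h U).elim s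
        naturality := fun U _ _ => by ext s; exact (h U).elim s })
    (fun _ _ => by ext U s; exact (h U).elim s)

lemma exists_equalizer_ι_app_eq {F G : Sheaf J (Type w)} (α β : F ⟶ G) {U : Cᵒᵖ}
    (x : F.obj.obj U) (h : α.hom.app U x = β.hom.app U x) :
    ∃ y, (equalizer.ι α β).hom.app U y = x := by
  let sections := sheafToPresheaf J (Type w) ⋙ (evaluation Cᵒᵖ (Type w)).obj U
  have hlim :=
    isLimitForkMapOfIsLimit sections (equalizer.condition α β) (equalizerIsEqualizer α β)
  obtain ⟨l, hl⟩ := Fork.IsLimit.lift' hlim (TypeCat.ofHom fun _ : PUnit => x) (by ext; exact h)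
  exact ⟨l PUnit.unit, ConcreteCategory.congr_hom hl PUnit.unit⟩

end CategoryTheory.Sheaf

namespace CategoryTheory.GrothendieckTopology.atomic

lemma isSheaf_const (hro : RightOreCondition C) (V : Type w) :
    Presheaf.IsSheaf (atomic hro) ((Functor.const Cᵒᵖ).obj V) := by
  rw [isSheaf_iff_isSheaf_of_type]
  intro X S hS s hs
  obtain ⟨Y, f, hf⟩ := hS
  refine ⟨(s f hf : V), fun Z g hg => ?_, fun t ht => ht f hf⟩
  obtain ⟨D, p, q, hpq⟩ := hro g f
  exact (hs p q hg hf hpq).symm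

def constSheaf (hro : RightOreCondition C) (V : Type w) : Sheaf (atomic hro) (Type w) :=
  ⟨_, isSheaf_const hro V⟩

variable {hro : RightOreCondition C}

lemma nonempty_isInitial_iff (S : Sheaf (atomic hro) (Type w)) :
    Nonempty (IsInitial S) ↔ ∀ U, IsEmpty (S.obj.obj U) :=
  ⟨fun ⟨hS⟩ U => ⟨fun s => ((hS.to (constSheaf hro PEmpty)).hom.app U s).elim⟩,
    fun h => ⟨Sheaf.isInitialOfIsEmpty S h⟩⟩

lemma forall_of_isGeneratingSection {F : Sheaf (atomic hro) (Type w)} {U : Cᵒᵖ}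
    {x : F.obj.obj U} (hx : Sheaf.IsGeneratingSection x)
    (P : ∀ ⦃V : Cᵒᵖ⦄, F.obj.obj V → Prop)
    (hP : ∀ ⦃V W : Cᵒᵖ⦄ (f : V ⟶ W) (y : F.obj.obj V), P (F.obj.map f y) ↔ P y)
    (hPx : P x) {V : Cᵒᵖ} (y : F.obj.obj V) : P y := by
  let χ : F ⟶ constSheaf hro (ULift Prop) := ObjectProperty.homMk
    { app := fun V => TypeCat.ofHom fun y => ULift.up (P y)
      naturality := fun V W f => by ext y; exact congrArg ULift.up (propext (hP f y)) }
  let τ : F ⟶ constSheaf hro (ULift Prop) := ObjectProperty.homMk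
    { app := fun V => TypeCat.ofHom fun _ => ULift.up True }
  have hχτ : χ = τ := hx _ (congrArg ULift.up (eq_true hPx))
  exact of_eq_true
    (congrArg (fun φ : F ⟶ constSheaf hro (ULift Prop) => (φ.hom.app V y).down) hχτ)

lemma isIso_of_mono_of_isGeneratingSection {F S : Sheaf (atomic hro) (Type w)} {U : Cᵒᵖ}
    {x : F.obj.obj U} (hx : Sheaf.IsGeneratingSection x) (m : S ⟶ F) [Mono m] {V : Cᵒᵖ}
    (y : S.obj.obj V) : IsIso m := by
  have hconn : ∀ ⦃W : Cᵒᵖ⦄ (z : F.obj.obj W), Presheaf.HasCommonRestriction F.obj z x :=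
    fun _ z => forall_of_isGeneratingSection hx
      (fun _ z => Presheaf.HasCommonRestriction F.obj z x)
      (fun _ _ f z => Presheaf.hasCommonRestriction_map_left_iff hro f z x)
      (Presheaf.HasCommonRestriction.refl x) z
  refine (Sheaf.isLocallyBijective_iff_isIso m).1 ⟨?_, ⟨fun z => ?_⟩⟩
  · have : Mono m.hom := (sheafToPresheaf _ _).map_mono m
    exact (Sheaf.isLocallyInjective_iff_injective m).2
      fun W => (mono_iff_injective (m.hom.app W)).1 inferInstance
  · obtain ⟨A, f, g, h⟩ := (hconn z).trans hro (hconn (m.hom.app V y)).symm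
    refine ⟨A.unop, f.unop, S.obj.map g y, ?_⟩
    rw [NatTrans.naturality_apply]
    exact h.symm

lemma exists_isGeneratingSection_of_isAtomObj {F : Sheaf (atomic hro) (Type w)}
    (hF : IsAtomObj F) : ∃ (c : C) (x : F.obj.obj (op c)), Sheaf.IsGeneratingSection x := by
  obtain ⟨hnotInitial, hsub⟩ := hF
  obtain ⟨⟨c⟩, ⟨x⟩⟩ : ∃ U, Nonempty (F.obj.obj U) := by
    by_contra! hempty
    exact hnotInitial ((nonempty_isInitial_iff F).2 hempty)
  refine ⟨c, x, fun G α β hαβ => ?_⟩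
  obtain ⟨y, -⟩ := Sheaf.exists_equalizer_ι_app_eq α β x hαβ
  rcases hsub (equalizer.ι α β) inferInstance with hiso | hinit
  · exact (cancel_epi _).1 (equalizer.condition α β)
  · exact ((nonempty_isInitial_iff _).1 hinit _).elim y

lemma isAtomObj_of_isGeneratingSection {F : Sheaf (atomic hro) (Type w)} {U : Cᵒᵖ}
    {x : F.obj.obj U} (hx : Sheaf.IsGeneratingSection x) : IsAtomObj F := by
  refine ⟨fun hinit => ((nonempty_isInitial_iff F).1 hinit U).elim x, fun S m _ => ?_⟩
  by_cases hS : ∃ V, Nonempty (S.obj.obj V)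
  · obtain ⟨V, ⟨y⟩⟩ := hS
    exact Or.inl (isIso_of_mono_of_isGeneratingSection hx m y)
  · simp only [not_exists, not_nonempty_iff] at hS
    exact Or.inr ((nonempty_isInitial_iff S).2 hS)

end CategoryTheory.GrothendieckTopology.atomic

/-- If `C` satisfies the right Ore condition and `Jat` is the topology whose
covering sieves are exactly the nonempty ones, then a sheaf `F` is an atom of
`Sh(C, Jat)` if and only if there are `c : C` and `x ∈ F(c)` such that every
morphism from `F` to any sheaf is uniquely determined by its value at `x`. -/
theorem stmt15 {C : Type u} [SmallCategory C]
    (hOre : ∀ {a b c : C} (f : a ⟶ c) (g : b ⟶ c),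
      ∃ (d : C) (p : d ⟶ a) (q : d ⟶ b), p ≫ f = q ≫ g)
    (Jat : GrothendieckTopology C)
    (hJat : ∀ (X : C) (S : Sieve X), S ∈ Jat X ↔ ∃ (Y : C) (f : Y ⟶ X), S f)
    (F : Sheaf Jat (Type u)) :
    IsAtomObj F ↔
      ∃ (c : C) (x : F.val.obj (Opposite.op c)),
        ∀ (G : Sheaf Jat (Type u)),
          Function.Injective
            (fun α : F ⟶ G => α.hom.app (Opposite.op c) x) := by
  obtain rfl : Jat = atomic fun f g => hOre f g := by
    ext X S
    exact hJat X S
  exact ⟨atomic.exists_isGeneratingSection_of_isAtomObj,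
    fun ⟨_, _, hx⟩ => atomic.isAtomObj_of_isGeneratingSection hx⟩
end

section
/- Let C be a small category and J ≤ K two Grothendieck topologies on C. If Sh(C,J) has a separating set S of objects each of which is an atom of Sh(C,J), then the set of those objects of the form a_K(s) for s ∈ S (the K-sheafification of the underlying presheaf of s) which are not initial in Sh(C,K) is a separating set of objects of Sh(C,K), each of which is an atom of Sh(C,K). -/
/-!
For `J ≤ K`, the inclusion of `K`-sheaves into `J`-sheaves is fully faithful with left adjoint
`F = a_K ∘ forget`, and `F` preserves finite limits. A left adjoint of a faithful functor sends a
separating set to a separating set, and initial objects can always be dropped from one.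
For atoms, pull a monomorphism `m : T ⟶ F s` back along the unit `s ⟶ F s`: `F` preserves this
pullback and inverts the unit, so `m` is, up to isomorphism, `F` applied to a monomorphism into
`s`. That one is an isomorphism or has initial domain, and `F` preserves both properties.
-/

open CategoryTheory CategoryTheory.Limits

universe u

namespace CategoryTheory

variable {C D : Type*} [Category C] [Category D]

lemma ObjectProperty.IsSeparating.and_not_isInitial {P : ObjectProperty C}
    (hP : P.IsSeparating) : ObjectProperty.IsSeparating (fun X => P X ∧ ¬ Nonempty (IsInitial X)) :=
  fun _ _ f g hfg => hP f g fun Z hZ h => by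
    by_cases hZ₀ : Nonempty (IsInitial Z)
    · exact hZ₀.some.hom_ext _ _
    · exact hfg Z ⟨hZ, hZ₀⟩ h

lemma ObjectProperty.IsSeparating.strictMap_of_adjunction {P : ObjectProperty D}
    (hP : P.IsSeparating) {F : D ⥤ C} {G : C ⥤ D} (adj : F ⊣ G) [G.Faithful] :
    (P.strictMap F).IsSeparating := fun _ _ f g hfg =>
  G.map_injective (hP _ _ fun Z hZ h => by
    obtain ⟨h', rfl⟩ := (adj.homEquiv _ _).surjective h
    rw [← adj.homEquiv_naturality_right, ← adj.homEquiv_naturality_right,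
      hfg _ (P.strictMap_obj F hZ) h'])

section Reflective

variable {F : D ⥤ C} {G : C ⥤ D} (adj : F ⊣ G) [G.Full] [G.Faithful] [HasPullbacks D]
  [PreservesLimitsOfShape WalkingCospan F]

lemma Adjunction.exists_iso_comp_map_pullback_snd {X : D} {T : C} (m : T ⟶ F.obj X) :
    ∃ e : T ≅ F.obj (pullback (G.map m) (adj.unit.app X)),
      e.hom ≫ F.map (pullback.snd _ _) = m := by
  have hsq := (IsPullback.of_hasPullback (G.map m) (adj.unit.app X)).map F
  have := hsq.isIso_fst_of_isIso
  refine ⟨(asIso (adj.counit.app T)).symm ≪≫ (asIso (F.map (pullback.fst _ _))).symm, ?_⟩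
  have hunit : inv (F.map (adj.unit.app X)) = adj.counit.app (F.obj X) :=
    IsIso.inv_eq_of_hom_inv_id (adj.left_triangle_components X)
  simp only [Iso.trans_hom, Iso.symm_hom, asIso_inv, Category.assoc]
  rw [IsIso.inv_comp_eq, IsIso.inv_comp_eq, ← adj.counit_naturality]
  simp only [Functor.id_obj]
  rw [← hunit, ← Category.assoc, IsIso.eq_comp_inv]
  exact hsq.w.symm

include adj in
lemma IsAtomObj.map_of_adjunction {X : D} (hX : IsAtomObj X)
    (hFX : ¬ Nonempty (IsInitial (F.obj X))) : IsAtomObj (F.obj X) := by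
  have := adj.isRightAdjoint
  have := adj.leftAdjoint_preservesColimits
  refine ⟨hFX, fun T m _ => ?_⟩
  obtain ⟨e, he⟩ := adj.exists_iso_comp_map_pullback_snd m
  rcases hX.2 (pullback.snd (G.map m) (adj.unit.app X)) inferInstance with h | h
  · rw [← he]; exact .inl inferInstance
  · exact .inr ⟨(h.some.isInitialObj F).ofIso e.symm⟩

end Reflective

end CategoryTheory

namespace CategoryTheory.GrothendieckTopology

variable {C : Type*} [Category C] {J K : GrothendieckTopology C} {A : Type*} [Category A]
  [HasWeakSheafify K A]

noncomputable def sheafificationAdjunctionOfLE (hJK : J ≤ K) :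
    sheafToPresheaf J A ⋙ presheafToSheaf K A ⊣
      ObjectProperty.ιOfLE (fun _ => Presheaf.IsSheaf.of_le (A := A) hJK) :=
  (sheafificationAdjunction K A).restrictFullyFaithful (fullyFaithfulSheafToPresheaf J A)
    (Functor.FullyFaithful.id _) (Iso.refl _) (Iso.refl _)

end CategoryTheory.GrothendieckTopology

/-- If `J ≤ K` and `Sh(C,J)` has a separating set `S` of atoms, then the
non-initial `K`-sheafifications of members of `S` form a separating set of
atoms of `Sh(C,K)`. -/
theorem stmt16 {C : Type u} [SmallCategory C] (J K : GrothendieckTopology C)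
    (hJK : J ≤ K) (S : Set (Sheaf J (Type u))) (hsep : ObjectProperty.IsSeparating S)
    (hatom : ∀ a ∈ S, IsAtomObj a) :
    ObjectProperty.IsSeparating
      {X : Sheaf K (Type u) |
        X ∈ (fun s : Sheaf J (Type u) => (presheafToSheaf K (Type u)).obj s.val) '' S ∧
          ¬ Nonempty (IsInitial X)} ∧
    ∀ X ∈ {X : Sheaf K (Type u) |
        X ∈ (fun s : Sheaf J (Type u) => (presheafToSheaf K (Type u)).obj s.val) '' S ∧
          ¬ Nonempty (IsInitial X)}, IsAtomObj X := by
  have adj := GrothendieckTopology.sheafificationAdjunctionOfLE (A := Type u) hJK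
  refine ⟨((hsep.strictMap_of_adjunction adj).and_not_isInitial).of_le ?_, ?_⟩
  · rintro _ ⟨⟨s, hs⟩, hX⟩
    exact ⟨⟨s, hs, rfl⟩, hX⟩
  · rintro _ ⟨⟨s, hs, rfl⟩, hX⟩
    exact (hatom s hs).map_of_adjunction adj hX
end
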